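/- There exists a constant C, independent of h, such that ‖Δ̃_h u‖₋₁ ≤ C‖∇u‖ for every u ∈ H¹(Ω). -/

import Mathlib

open MeasureTheory Set

noncomputable section

/-- Points of the plane. -/
abbrev Pt : Type := ℝ × ℝ

/-- Partial derivative in the `x` direction. -/
def pdx (f : Pt → ℝ) (p : Pt) : ℝ := fderiv ℝ f p (1, 0)

/-- Partial derivative in the `y` direction. -/
def pdy (f : Pt → ℝ) (p : Pt) : ℝ := fderiv ℝ f p (0, 1)

/-- Laplacian. -/
def lap (f : Pt → ℝ) (p : Pt) : ℝ := pdx (pdx f) p + pdy (pdy f) p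

/-- Pointwise time derivative of a time-dependent function. -/
def tderiv (f : ℝ → Pt → ℝ) (t : ℝ) (p : Pt) : ℝ := deriv (fun s => f s p) t

/-- Pointwise iterated time derivative. -/
def tderivIter (k : ℕ) (f : ℝ → Pt → ℝ) (t : ℝ) (p : Pt) : ℝ :=
  iteratedDeriv k (fun s => f s p) t

/-- Membership in `L²(Ω)`. -/
def MemL2 (Ω : Set Pt) (f : Pt → ℝ) : Prop :=
  Integrable (fun p => f p ^ 2) (volume.restrict Ω)

/-- Membership in the Sobolev space `H^k(Ω)` (square-integrability of all
derivatives of order `≤ k`). -/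
def MemH (Ω : Set Pt) (k : ℕ) (f : Pt → ℝ) : Prop :=
  ∀ i ≤ k, Integrable (fun p => ‖iteratedFDeriv ℝ i f p‖ ^ 2) (volume.restrict Ω)

/-- The `L²(Ω)` norm. -/
def L2norm (Ω : Set Pt) (f : Pt → ℝ) : ℝ := Real.sqrt (∫ p in Ω, f p ^ 2)

/-- The `H^k(Ω)` norm. -/
def HNorm (Ω : Set Pt) (k : ℕ) (f : Pt → ℝ) : ℝ :=
  Real.sqrt (∑ i ∈ Finset.range (k + 1), ∫ p in Ω, ‖iteratedFDeriv ℝ i f p‖ ^ 2)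

/-- Membership in `H¹₀(Ω)`: in `H¹(Ω)` with vanishing trace on `∂Ω`. -/
def MemH10 (Ω : Set Pt) (w : Pt → ℝ) : Prop :=
  MemH Ω 1 w ∧ ∀ p ∈ frontier Ω, w p = 0

/-- The `L²(Ω)` inner product. -/
def L2inner (Ω : Set Pt) (f g : Pt → ℝ) : ℝ := ∫ p in Ω, f p * g p

/-- Pointwise dot product of gradients, `∇f · ∇g`. -/
def gradDot (f g : Pt → ℝ) (p : Pt) : ℝ := pdx f p * pdx g p + pdy f p * pdy g p

/-- The bilinear form `a(u,v) = (u,v) + b(∇u,∇v)` (this is `a_D` on `H¹₀ × H¹₀`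
and `a_N` on `H¹ × H¹`). -/
def aForm (Ω : Set Pt) (b : ℝ) (f g : Pt → ℝ) : ℝ :=
  L2inner Ω f g + b * ∫ p in Ω, gradDot f g p

/-- The negative norm `‖w‖₋₁ = sup{(w,z)/‖z‖₁ : 0 ≠ z ∈ H¹(Ω)}`. -/
def negNorm1 (Ω : Set Pt) (w : Pt → ℝ) : ℝ :=
  sSup ((fun z => L2inner Ω w z / HNorm Ω 1 z) ''
    {z : Pt → ℝ | MemH Ω 1 z ∧ HNorm Ω 1 z ≠ 0})

/-- The negative norm `‖w‖₋₂ = sup{(w,z)/‖z‖₂ : 0 ≠ z ∈ H²(Ω) ∩ H¹₀(Ω)}`. -/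
def negNorm2 (Ω : Set Pt) (w : Pt → ℝ) : ℝ :=
  sSup ((fun z => L2inner Ω w z / HNorm Ω 2 z) ''
    {z : Pt → ℝ | MemH Ω 2 z ∧ (∀ p ∈ frontier Ω, z p = 0) ∧ HNorm Ω 2 z ≠ 0})

/-- The `L^∞(Ω)` norm. -/
def LinfNorm (Ω : Set Pt) (f : Pt → ℝ) : ℝ := sSup ((fun p => |f p|) '' Ω)

/-! Tested against `z ∈ H¹`, the element `Δ̃_h u ∈ S̃_h` only sees the `L²`-projection of `z`:
`(Δ̃_h u, z) = (Δ̃_h u, P̃_h z) = −(∇u, ∇P̃_h z) ≤ ‖∇u‖ ‖∇P̃_h z‖ ≤ √2 ‖∇u‖ ‖P̃_h z‖₁`,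
and the `H¹`-stability of `P̃_h` bounds the last factor by `C_P ‖z‖₁`. -/

theorem integral_mul_le_sqrt_integral_sq_mul_sqrt_integral_sq {α : Type*} [MeasurableSpace α]
    {μ : Measure α} {f g : α → ℝ} (hf : MemLp f 2 μ) (hg : MemLp g 2 μ) :
    ∫ a, f a * g a ∂μ ≤ √(∫ a, f a ^ 2 ∂μ) * √(∫ a, g a ^ 2 ∂μ) := by
  have holder := integral_mul_norm_le_Lp_mul_Lq (μ := μ) (f := f) (g := g)
    Real.HolderConjugate.two_two (by rwa [ENNReal.ofReal_ofNat]) (by rwa [ENNReal.ofReal_ofNat])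
  simp only [Real.rpow_two, Real.norm_eq_abs, sq_abs, ← Real.sqrt_eq_rpow] at holder
  calc ∫ a, f a * g a ∂μ ≤ ‖∫ a, f a * g a ∂μ‖ := le_abs_self _
    _ ≤ ∫ a, |f a| * |g a| ∂μ := by
      simpa only [norm_mul, Real.norm_eq_abs] using
        norm_integral_le_integral_norm (μ := μ) (fun a => f a * g a)
    _ ≤ _ := holder

lemma abs_pdx_le (f : Pt → ℝ) (p : Pt) : |pdx f p| ≤ ‖fderiv ℝ f p‖ := by
  simpa [pdx] using (fderiv ℝ f p).le_opNorm (1, 0)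

lemma abs_pdy_le (f : Pt → ℝ) (p : Pt) : |pdy f p| ≤ ‖fderiv ℝ f p‖ := by
  simpa [pdy] using (fderiv ℝ f p).le_opNorm (0, 1)

lemma measurable_gradDot (f g : Pt → ℝ) : Measurable (gradDot f g) :=
  ((measurable_fderiv_apply_const ℝ f _).mul (measurable_fderiv_apply_const ℝ g _)).add
    ((measurable_fderiv_apply_const ℝ f _).mul (measurable_fderiv_apply_const ℝ g _))

lemma gradDot_self_nonneg (f : Pt → ℝ) (p : Pt) : 0 ≤ gradDot f f p :=
  add_nonneg (mul_self_nonneg _) (mul_self_nonneg _)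

/-- The norm on `ℝ × ℝ` is the sup norm, so `‖Df‖` bounds each partial derivative only
separately: hence the factor `2`. -/
lemma gradDot_self_le (f : Pt → ℝ) (p : Pt) : gradDot f f p ≤ 2 * ‖fderiv ℝ f p‖ ^ 2 := by
  have hx := sq_le_sq' (abs_le.1 (abs_pdx_le f p)).1 (abs_le.1 (abs_pdx_le f p)).2
  have hy := sq_le_sq' (abs_le.1 (abs_pdy_le f p)).1 (abs_le.1 (abs_pdy_le f p)).2
  rw [gradDot]
  nlinarith

lemma abs_gradDot_le (u v : Pt → ℝ) (p : Pt) :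
    |gradDot u v p| ≤ √(gradDot u u p) * √(gradDot v v p) := by
  rw [← Real.sqrt_mul (gradDot_self_nonneg u p)]
  refine Real.abs_le_sqrt ?_
  simp only [gradDot]
  nlinarith [sq_nonneg (pdx u p * pdy v p - pdy u p * pdx v p)]

section Sobolev

variable {Ω : Set Pt} {k : ℕ} {f u v : Pt → ℝ}

lemma MemH.memL2 (hf : MemH Ω k f) : MemL2 Ω f := by
  simpa [MemL2] using hf 0 k.zero_le

lemma MemH.memLp (hf : MemH Ω k f) (hm : AEStronglyMeasurable f (volume.restrict Ω)) :
    MemLp f 2 (volume.restrict Ω) :=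
  (memLp_two_iff_integrable_sq hm).2 hf.memL2

lemma MemH.integrable_gradDot_self (hf : MemH Ω k f) (hk : 1 ≤ k) :
    Integrable (gradDot f f) (volume.restrict Ω) := by
  refine ((hf 1 hk).const_mul 2).mono' (measurable_gradDot f f).aestronglyMeasurable
    (ae_of_all _ fun p => ?_)
  rw [Real.norm_of_nonneg (gradDot_self_nonneg f p), norm_iteratedFDeriv_one]
  exact gradDot_self_le f p

lemma MemH.memLp_sqrt_gradDot_self (hf : MemH Ω k f) (hk : 1 ≤ k) :
    MemLp (fun p => √(gradDot f f p)) 2 (volume.restrict Ω) := by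
  refine (memLp_two_iff_integrable_sq (measurable_gradDot f f).sqrt.aestronglyMeasurable).2 ?_
  simpa only [Real.sq_sqrt (gradDot_self_nonneg f _)] using hf.integrable_gradDot_self hk

lemma sqrt_integral_gradDot_self_le (hf : MemH Ω 1 f) :
    √(∫ p in Ω, gradDot f f p) ≤ √2 * HNorm Ω 1 f := by
  rw [HNorm, ← Real.sqrt_mul zero_le_two]
  refine Real.sqrt_le_sqrt ?_
  have h0 : 0 ≤ ∫ p in Ω, ‖iteratedFDeriv ℝ 0 f p‖ ^ 2 := integral_nonneg fun p => sq_nonneg _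
  have h1 : ∫ p in Ω, gradDot f f p ≤ ∫ p in Ω, 2 * ‖iteratedFDeriv ℝ 1 f p‖ ^ 2 :=
    integral_mono (hf.integrable_gradDot_self le_rfl) ((hf 1 le_rfl).const_mul 2) fun p => by
      simpa only [norm_iteratedFDeriv_one] using gradDot_self_le f p
  rw [integral_const_mul] at h1
  simp only [Finset.sum_range_succ, Finset.sum_range_zero]
  linarith

theorem neg_integral_gradDot_le (hu : MemH Ω 1 u) (hv : MemH Ω 1 v) :
    -∫ p in Ω, gradDot u v p ≤ √(∫ p in Ω, gradDot u u p) * √(∫ p in Ω, gradDot v v p) := by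
  have hprod := (hu.memLp_sqrt_gradDot_self le_rfl).integrable_mul
    (hv.memLp_sqrt_gradDot_self le_rfl)
  have huv : Integrable (gradDot u v) (volume.restrict Ω) :=
    hprod.mono' (measurable_gradDot u v).aestronglyMeasurable
      (ae_of_all _ (abs_gradDot_le u v))
  calc -∫ p in Ω, gradDot u v p = ∫ p in Ω, -gradDot u v p := (integral_neg _).symm
    _ ≤ ∫ p in Ω, √(gradDot u u p) * √(gradDot v v p) :=
      integral_mono huv.neg hprod fun p => (neg_le_abs _).trans (abs_gradDot_le u v p)
    _ ≤ _ := integral_mul_le_sqrt_integral_sq_mul_sqrt_integral_sq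
      (hu.memLp_sqrt_gradDot_self le_rfl) (hv.memLp_sqrt_gradDot_self le_rfl)
    _ = √(∫ p in Ω, gradDot u u p) * √(∫ p in Ω, gradDot v v p) := by
      simp only [Real.sq_sqrt (gradDot_self_nonneg _ _)]

end Sobolev

lemma L2inner_eq_of_L2inner_sub_eq_zero {Ω : Set Pt} {χ z v : Pt → ℝ}
    (hz : Integrable (fun p => χ p * z p) (volume.restrict Ω))
    (hv : Integrable (fun p => χ p * v p) (volume.restrict Ω))
    (h : L2inner Ω (fun p => z p - v p) χ = 0) :
    L2inner Ω χ z = L2inner Ω χ v := by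
  have hsplit : ∀ p, (z p - v p) * χ p = χ p * z p - χ p * v p := fun p => by ring
  simp only [L2inner, hsplit] at h ⊢
  rwa [integral_sub hz hv, sub_eq_zero] at h

lemma negNorm1_le {Ω : Set Pt} {w : Pt → ℝ} {M : ℝ} (hM : 0 ≤ M)
    (h : ∀ z, MemH Ω 1 z → L2inner Ω w z ≤ M * HNorm Ω 1 z) : negNorm1 Ω w ≤ M := by
  refine Real.sSup_le ?_ hM
  rintro _ ⟨z, ⟨hz, hz0⟩, rfl⟩
  have hpos : 0 < HNorm Ω 1 z := (Real.sqrt_nonneg _).lt_of_ne' hz0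
  exact (div_le_iff₀ hpos).2 (h z hz)

theorem discrete_laplacian_negative_norm_general
    (Ω : Set Pt) (hΩo : IsOpen Ω)
    (St : ℝ → Submodule ℝ (Pt → ℝ))
    (hStreg : ∀ h > (0 : ℝ), ∀ f ∈ St h, MemH Ω 1 f ∧ ContinuousOn f (closure Ω))
    -- the discrete Laplacian `Δ̃_h`
    (Dh : ℝ → (Pt → ℝ) → Pt → ℝ)
    (hDhmem : ∀ h > (0 : ℝ), ∀ w : Pt → ℝ, Dh h w ∈ St h)
    (hDh : ∀ h > (0 : ℝ), ∀ w : Pt → ℝ, MemH Ω 1 w → ∀ χ ∈ St h,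
      L2inner Ω (Dh h w) χ = -(∫ p in Ω, gradDot w χ p))
    -- the `L²` projection `P̃_h` onto `S̃_h` and its `H¹` stability
    (Ph : ℝ → (Pt → ℝ) → Pt → ℝ)
    (hPhmem : ∀ h > (0 : ℝ), ∀ w : Pt → ℝ, Ph h w ∈ St h)
    (hPh : ∀ h > (0 : ℝ), ∀ w : Pt → ℝ, MemL2 Ω w → ∀ χ ∈ St h,
      L2inner Ω (fun p => w p - Ph h w p) χ = 0)
    (Cp : ℝ)
    (hPstab : ∀ h > (0 : ℝ), ∀ w : Pt → ℝ, MemH Ω 1 w →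
      HNorm Ω 1 (Ph h w) ≤ Cp * HNorm Ω 1 w) :
    ∃ C : ℝ, 0 < C ∧ ∀ h > (0 : ℝ), ∀ u : Pt → ℝ, MemH Ω 1 u →
      negNorm1 Ω (Dh h u) ≤ C * Real.sqrt (∫ p in Ω, gradDot u u p) := by
  refine ⟨√2 * |Cp| + 1, by positivity, fun h hh u hu =>
    negNorm1_le (by positivity) fun z hz => ?_⟩
  set χ := Dh h u
  set v := Ph h z
  set gradNorm := √(∫ p in Ω, gradDot u u p)
  obtain ⟨hχ, hχc⟩ := hStreg h hh χ (hDhmem h hh u)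
  obtain ⟨hv, hvc⟩ := hStreg h hh v (hPhmem h hh z)
  have hz₀ : 0 ≤ HNorm Ω 1 z := Real.sqrt_nonneg _
  by_cases hχz : Integrable (fun p => χ p * z p) (volume.restrict Ω)
  swap
  · -- junk value: a non-integrable `χ z` has integral `0`
    rw [L2inner, integral_undef hχz]
    positivity
  have hχv : Integrable (fun p => χ p * v p) (volume.restrict Ω) :=
    (hχ.memLp (hχc.mono subset_closure |>.aestronglyMeasurable hΩo.measurableSet)).integrable_mul
      (hv.memLp (hvc.mono subset_closure |>.aestronglyMeasurable hΩo.measurableSet))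
  calc L2inner Ω χ z = L2inner Ω χ v :=
        L2inner_eq_of_L2inner_sub_eq_zero hχz hχv (hPh h hh z hz.memL2 χ (hDhmem h hh u))
    _ = -∫ p in Ω, gradDot u v p := hDh h hh u hu v (hPhmem h hh z)
    _ ≤ gradNorm * √(∫ p in Ω, gradDot v v p) := neg_integral_gradDot_le hu hv
    _ ≤ gradNorm * (√2 * (Cp * HNorm Ω 1 z)) := by
      gcongr
      exact (sqrt_integral_gradDot_self_le hv).trans (by gcongr; exact hPstab h hh z hz)
    _ ≤ gradNorm * (√2 * (|Cp| * HNorm Ω 1 z)) := by gcongr; exact le_abs_self Cp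
    _ ≤ (√2 * |Cp| + 1) * gradNorm * HNorm Ω 1 z := by
      nlinarith [mul_nonneg (Real.sqrt_nonneg _ : 0 ≤ gradNorm) hz₀]

/-- **Lemma 3.3.** There is a constant `C`, independent of `h`, such that
`‖Δ̃_h u‖₋₁ ≤ C‖∇u‖` for every `u ∈ H¹(Ω)`, where the discrete Laplacian
`Δ̃_h : H¹ → S̃_h` is defined by `(Δ̃_h w, χ) = −(∇w, ∇χ)` for all `χ ∈ S̃_h`,
and the `L²`-projection `P̃_h` onto `S̃_h` is stable on `H¹`. -/
theorem discrete_laplacian_negative_norm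
    (Ω : Set Pt) (hΩo : IsOpen Ω) (hΩb : Bornology.IsBounded Ω)
    (hΩc : Convex ℝ Ω) (hΩne : Ω.Nonempty)
    (r : ℕ) (hr : 2 ≤ r)
    (St : ℝ → Submodule ℝ (Pt → ℝ))
    (hStreg : ∀ h > (0 : ℝ), ∀ f ∈ St h, MemH Ω 1 f ∧ ContinuousOn f (closure Ω))
    -- the discrete Laplacian `Δ̃_h`
    (Dh : ℝ → (Pt → ℝ) → Pt → ℝ)
    (hDhmem : ∀ h > (0 : ℝ), ∀ w : Pt → ℝ, Dh h w ∈ St h)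
    (hDh : ∀ h > (0 : ℝ), ∀ w : Pt → ℝ, MemH Ω 1 w → ∀ χ ∈ St h,
      L2inner Ω (Dh h w) χ = -(∫ p in Ω, gradDot w χ p))
    -- the `L²` projection `P̃_h` onto `S̃_h` and its `H¹` stability
    (Ph : ℝ → (Pt → ℝ) → Pt → ℝ)
    (hPhmem : ∀ h > (0 : ℝ), ∀ w : Pt → ℝ, Ph h w ∈ St h)
    (hPh : ∀ h > (0 : ℝ), ∀ w : Pt → ℝ, MemL2 Ω w → ∀ χ ∈ St h,
      L2inner Ω (fun p => w p - Ph h w p) χ = 0)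
    (Cp : ℝ)
    (hPstab : ∀ h > (0 : ℝ), ∀ w : Pt → ℝ, MemH Ω 1 w →
      HNorm Ω 1 (Ph h w) ≤ Cp * HNorm Ω 1 w) :
    ∃ C : ℝ, 0 < C ∧ ∀ h > (0 : ℝ), ∀ u : Pt → ℝ, MemH Ω 1 u →
      negNorm1 Ω (Dh h u) ≤ C * Real.sqrt (∫ p in Ω, gradDot u u p) :=
  discrete_laplacian_negative_norm_general Ω hΩo St hStreg Dh hDhmem hDh Ph hPhmem hPh Cp hPstab
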